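/- Along any solution of the error system ė_pⁱ = e_vⁱ, mᵢė_vⁱ = uⁱ with the control law uⁱ = −Σ_{j∈Nᵢ} w_{ij}(e_vⁱ − e_vʲ) − Σ_{j∈Nᵢ} ∇_{e_pⁱ}Ṽ^{ij} − hᵢmᵢe_vⁱ, where hᵢ ∈ {0,1} indicates whether agent i can detect the reference signal, the energy function J = (1/2)Σ_{i=1}^N (Ṽⁱ + mᵢ e_vⁱᵀe_vⁱ) satisfies J̇ = −e_vᵀ(L⊗Iₙ)e_v − e_vᵀ(M̂⊗Iₙ)e_v ≤ 0, where M̂ = diag(h₁m₁, …, h_Nm_N) is positive semi-definite. -/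

import Mathlib

/-!
Differentiating `J`, the potentials contribute `Σᵢ Σ_{j ∈ Nᵢ} ⟪∇Ṽ^{ij}, e_vⁱ - e_vʲ⟫`. Since
`Ṽ^{ij}` is even and symmetric in `i, j`, its gradients are antisymmetric along edges, so swapping
the roles of `i` and `j` collapses this sum to `2 Σᵢ ⟪e_vⁱ, Σⱼ ∇Ṽ^{ij}⟫`, which cancels the
potential term of the control. What remains is minus the Laplacian form
`Σᵢ Σⱼ wᵢⱼ ⟪e_vⁱ, e_vⁱ - e_vʲ⟫ = ½ Σᵢ Σⱼ wᵢⱼ ‖e_vⁱ - e_vʲ‖²` (the same swap, applied to the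
antisymmetric field `wᵢⱼ (e_vⁱ - e_vʲ)`) minus `Σᵢ hᵢmᵢ ‖e_vⁱ‖²`.
-/

open Matrix
open scoped Kronecker RealInnerProductSpace

section Kronecker

variable {ι κ : Type*} [Fintype ι] [Fintype κ] [DecidableEq κ]

lemma dotProduct_kronecker_one_mulVec (A : Matrix ι ι ℝ) (x : ι → EuclideanSpace ℝ κ) :
    (fun p : ι × κ => x p.1 p.2) ⬝ᵥ (A ⊗ₖ (1 : Matrix κ κ ℝ)) *ᵥ (fun p => x p.1 p.2) =
      ∑ i, ∑ j, A i j * ⟪x i, x j⟫ := by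
  simp only [dotProduct, mulVec, kroneckerMap_apply, one_apply, Fintype.sum_prod_type,
    PiLp.inner_apply, RCLike.inner_apply, conj_trivial, mul_ite, mul_one, mul_zero,
    ite_mul, zero_mul, Finset.sum_ite_eq, Finset.mem_univ, if_true, Finset.mul_sum]
  refine Finset.sum_congr rfl fun i _ => ?_
  rw [Finset.sum_comm]
  exact Finset.sum_congr rfl fun j _ => Finset.sum_congr rfl fun a _ => by ring

lemma dotProduct_diagonal_kronecker_one_mulVec [DecidableEq ι] (d : ι → ℝ)
    (x : ι → EuclideanSpace ℝ κ) :
    (fun p : ι × κ => x p.1 p.2) ⬝ᵥ (diagonal d ⊗ₖ (1 : Matrix κ κ ℝ)) *ᵥ (fun p => x p.1 p.2) =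
      ∑ i, d i * ⟪x i, x i⟫ := by
  simp [dotProduct_kronecker_one_mulVec, diagonal_apply, ite_mul]

end Kronecker

variable {E : Type*} [NormedAddCommGroup E] [InnerProductSpace ℝ E]

lemma gradient_neg_of_even [CompleteSpace E] {f : E → ℝ} (hf : ∀ x, f (-x) = f x) (x : E) :
    gradient f (-x) = -gradient f x := by
  have h := (ContinuousLinearEquiv.neg ℝ : E ≃L[ℝ] E).comp_right_fderiv (f := f) (x := x)
  rw [show f ∘ (ContinuousLinearEquiv.neg ℝ : E ≃L[ℝ] E) = f from funext hf] at h
  have h' : fderiv ℝ f x = -fderiv ℝ f (-x) := by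
    rw [h]; ext y; simp
  simp [gradient, h']

lemma HasDerivAt.mul_inner_self {v : ℝ → E} {a : E} {t : ℝ} (hv : HasDerivAt v a t) (c : ℝ) :
    HasDerivAt (fun s => c * ⟪v s, v s⟫) (2 * ⟪v t, c • a⟫) t := by
  refine ((hv.inner ℝ hv).const_mul c).congr_deriv ?_
  rw [real_inner_smul_right, real_inner_comm a]
  ring

namespace SimpleGraph

variable {ι : Type*} [Fintype ι] (G : SimpleGraph ι) [DecidableRel G.Adj]

lemma sum_sum_neighborFinset_comm {M : Type*} [AddCommMonoid M] (F : ι → ι → M) :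
    ∑ i, ∑ j ∈ G.neighborFinset i, F i j = ∑ i, ∑ j ∈ G.neighborFinset i, F j i :=
  Finset.sum_comm' fun i j => by simp [mem_neighborFinset, adj_comm]

lemma sum_sum_neighborFinset_inner_sub {g : ι → ι → E}
    (hg : ∀ i j, G.Adj i j → g j i = -g i j) (x : ι → E) :
    ∑ i, ∑ j ∈ G.neighborFinset i, ⟪g i j, x i - x j⟫ =
      2 * ∑ i, ∑ j ∈ G.neighborFinset i, ⟪x i, g i j⟫ := by
  have hswap : ∑ i, ∑ j ∈ G.neighborFinset i, ⟪g i j, x j⟫ =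
      -∑ i, ∑ j ∈ G.neighborFinset i, ⟪x i, g i j⟫ := by
    rw [G.sum_sum_neighborFinset_comm]
    simp only [← Finset.sum_neg_distrib]
    refine Finset.sum_congr rfl fun i _ => Finset.sum_congr rfl fun j hj => ?_
    rw [hg i j ((G.mem_neighborFinset i j).1 hj), inner_neg_left, real_inner_comm]
  simp only [inner_sub_right, Finset.sum_sub_distrib, hswap, real_inner_comm (g _ _)]
  ring

lemma sum_sum_neighborFinset_mul_inner_sub_nonneg {w : ι → ι → ℝ}
    (hw_symm : ∀ i j, w i j = w j i) (hw_nonneg : ∀ i j, 0 ≤ w i j) (x : ι → E) :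
    0 ≤ ∑ i, ∑ j ∈ G.neighborFinset i, w i j * ⟪x i, x i - x j⟫ := by
  have h := G.sum_sum_neighborFinset_inner_sub (g := fun i j => w i j • (x i - x j))
    (fun i j _ => by rw [hw_symm j i, ← smul_neg, neg_sub]) x
  have hsq : 0 ≤ ∑ i, ∑ j ∈ G.neighborFinset i, ⟪w i j • (x i - x j), x i - x j⟫ :=
    Finset.sum_nonneg fun i _ => Finset.sum_nonneg fun j _ => by
      rw [real_inner_smul_left]; exact mul_nonneg (hw_nonneg i j) real_inner_self_nonneg
  simp only [real_inner_smul_right] at h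
  linarith

lemma sum_sum_laplacian_mul_inner [DecidableEq ι] {w : ι → ι → ℝ}
    (hw_off : ∀ i j, ¬G.Adj i j → w i j = 0) {L : Matrix ι ι ℝ}
    (hL : ∀ i j, L i j = if i = j then ∑ k ∈ Finset.univ.erase i, w i k else -w i j)
    (x : ι → E) :
    ∑ i, ∑ j, L i j * ⟪x i, x j⟫ = ∑ i, ∑ j ∈ G.neighborFinset i, w i j * ⟪x i, x i - x j⟫ := by
  refine Finset.sum_congr rfl fun i _ => ?_
  have hsub : G.neighborFinset i ⊆ Finset.univ.erase i := fun j hj =>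
    Finset.mem_erase.2 ⟨(G.ne_of_adj ((G.mem_neighborFinset i j).1 hj)).symm, Finset.mem_univ j⟩
  calc ∑ j, L i j * ⟪x i, x j⟫
      = L i i * ⟪x i, x i⟫ + ∑ j ∈ Finset.univ.erase i, L i j * ⟪x i, x j⟫ :=
        (Finset.add_sum_erase _ _ (Finset.mem_univ i)).symm
    _ = ∑ j ∈ Finset.univ.erase i, w i j * ⟪x i, x i - x j⟫ := by
        rw [hL i i, if_pos rfl, Finset.sum_mul, ← Finset.sum_add_distrib]
        refine Finset.sum_congr rfl fun j hj => ?_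
        rw [hL i j, if_neg (Finset.ne_of_mem_erase hj).symm, inner_sub_right]
        ring
    _ = ∑ j ∈ G.neighborFinset i, w i j * ⟪x i, x i - x j⟫ :=
        (Finset.sum_subset hsub fun j _ hj => by
          rw [hw_off i j fun hij => hj ((G.mem_neighborFinset i j).2 hij), zero_mul]).symm

variable [CompleteSpace E]

lemma hasDerivAt_sum_neighborFinset_potential {V : ι → ι → E → ℝ}
    (hV : ∀ i j, G.Adj i j → Differentiable ℝ (V i j)) {p : ι → ℝ → E} {v : ι → E} {t : ℝ}
    (hp : ∀ i, HasDerivAt (p i) (v i) t) :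
    HasDerivAt (fun s => ∑ i, ∑ j ∈ G.neighborFinset i, V i j (p i s - p j s))
      (∑ i, ∑ j ∈ G.neighborFinset i, ⟪gradient (V i j) (p i t - p j t), v i - v j⟫) t := by
  refine HasDerivAt.fun_sum fun i _ => HasDerivAt.fun_sum fun j hj => ?_
  have hV_ij := (hV i j ((G.mem_neighborFinset i j).1 hj) (p i t - p j t)).hasGradientAt
  simpa [InnerProductSpace.toDual_apply_apply, Function.comp_def] using
    hV_ij.hasFDerivAt.comp_hasDerivAt t ((hp i).sub (hp j))

lemma hasDerivAt_energy {V : ι → ι → E → ℝ} (hV_symm : ∀ i j, V i j = V j i)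
    (hV_even : ∀ i j z, V i j (-z) = V i j z)
    (hV_diff : ∀ i j, G.Adj i j → Differentiable ℝ (V i j))
    (m : ι → ℝ) {p v : ι → ℝ → E} {a : ι → E} {t : ℝ}
    (hp : ∀ i, HasDerivAt (p i) (v i t) t) (hv : ∀ i, HasDerivAt (v i) (a i) t) :
    HasDerivAt (fun s => (1 / 2) * ∑ i,
        ((∑ j ∈ G.neighborFinset i, V i j (p i s - p j s)) + m i * ⟪v i s, v i s⟫))
      (∑ i, ⟪v i t, (∑ j ∈ G.neighborFinset i, gradient (V i j) (p i t - p j t)) + m i • a i⟫)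
      t := by
  have hpot := G.hasDerivAt_sum_neighborFinset_potential hV_diff hp
  rw [G.sum_sum_neighborFinset_inner_sub (fun i j _ => by
    rw [hV_symm j i, ← neg_sub, gradient_neg_of_even (hV_even i j)])] at hpot
  have hkin := HasDerivAt.fun_sum fun i (_ : i ∈ Finset.univ) => (hv i).mul_inner_self (m i)
  simp only [Finset.sum_add_distrib]
  refine ((hpot.add hkin).const_mul (1 / 2)).congr_deriv ?_
  simp only [inner_add_right, inner_sum, Finset.sum_add_distrib, ← Finset.mul_sum]
  ring

end SimpleGraph

theorem energy_derivative_partial_information_general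
    (N n : ℕ)
    (m : Fin N → ℝ) (hm : ∀ i, 0 < m i)
    (G : SimpleGraph (Fin N)) [DecidableRel G.Adj]
    (w : Fin N → Fin N → ℝ)
    (hw_symm : ∀ i j, w i j = w j i)
    (hw_nonneg : ∀ i j, 0 ≤ w i j)
    (hw_adj : ∀ i j, 0 < w i j ↔ G.Adj i j)
    -- the potential `Ṽ^{ij}`, viewed as a function of the relative position
    -- vector `e_pⁱ - e_pʲ`
    (V : Fin N → Fin N → EuclideanSpace ℝ (Fin n) → ℝ)
    (hV_symm : ∀ i j, V i j = V j i)
    (hV_rad : ∀ i j (z z' : EuclideanSpace ℝ (Fin n)), ‖z‖ = ‖z'‖ → V i j z = V i j z')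
    (hV_diff : ∀ i j, G.Adj i j → Differentiable ℝ (V i j))
    (h : Fin N → ℝ) (hh01 : ∀ i, h i = 0 ∨ h i = 1)
    (ep ev u : Fin N → ℝ → EuclideanSpace ℝ (Fin n))
    (hu : ∀ i t, u i t =
      -(∑ j ∈ G.neighborFinset i, w i j • (ev i t - ev j t))
      - (∑ j ∈ G.neighborFinset i, gradient (V i j) (ep i t - ep j t))
      - (h i * m i) • ev i t)
    (hep : ∀ i t, HasDerivAt (ep i) (ev i t) t)
    (hev : ∀ i t, HasDerivAt (ev i) ((m i)⁻¹ • u i t) t)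
    (L : Matrix (Fin N) (Fin N) ℝ)
    (hL : ∀ i j, L i j = if i = j then ∑ k ∈ Finset.univ.erase i, w i k else -w i j)
    (J : ℝ → ℝ)
    (hJ : ∀ t, J t = (1 / 2) * ∑ i,
      ((∑ j ∈ G.neighborFinset i, V i j (ep i t - ep j t)) + m i * ⟪ev i t, ev i t⟫))
    -- the stacked vector `e_v(t) ∈ ℝ^{Nn}`
    (e : ℝ → Fin N × Fin n → ℝ)
    (he : ∀ t p, e t p = ev p.1 t p.2) :
    ∀ t : ℝ,
      HasDerivAt J
        (-(e t ⬝ᵥ (L ⊗ₖ (1 : Matrix (Fin n) (Fin n) ℝ)).mulVec (e t))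
          - e t ⬝ᵥ (Matrix.diagonal (fun i => h i * m i) ⊗ₖ (1 : Matrix (Fin n) (Fin n) ℝ)).mulVec (e t)) t ∧
      (-(e t ⬝ᵥ (L ⊗ₖ (1 : Matrix (Fin n) (Fin n) ℝ)).mulVec (e t))
          - e t ⬝ᵥ (Matrix.diagonal (fun i => h i * m i) ⊗ₖ (1 : Matrix (Fin n) (Fin n) ℝ)).mulVec (e t) ≤ 0) ∧
      (Matrix.diagonal (fun i => h i * m i)).PosSemidef := by
  intro t
  have hw_off : ∀ i j, ¬G.Adj i j → w i j = 0 := fun i j hij =>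
    ((hw_nonneg i j).lt_or_eq.resolve_left fun hpos => hij ((hw_adj i j).1 hpos)).symm
  have hM_nonneg : ∀ i, 0 ≤ h i * m i := fun i =>
    mul_nonneg (by rcases hh01 i with h0 | h1 <;> simp [*]) (hm i).le
  have hJ_deriv : HasDerivAt J (-(∑ i, ∑ j ∈ G.neighborFinset i, w i j * ⟪ev i t, ev i t - ev j t⟫)
      - ∑ i, h i * m i * ⟪ev i t, ev i t⟫) t := by
    rw [funext hJ]
    refine (G.hasDerivAt_energy hV_symm (fun i j z => hV_rad i j _ _ (norm_neg z)) hV_diff m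
      (fun i => hep i t) (fun i => hev i t)).congr_deriv ?_
    rw [← Finset.sum_neg_distrib, ← Finset.sum_sub_distrib]
    refine Finset.sum_congr rfl fun i _ => ?_
    rw [smul_inv_smul₀ (hm i).ne', hu]
    simp only [inner_add_right, inner_sub_right, inner_neg_right, inner_sum, real_inner_smul_right]
    ring
  rw [funext (he t), dotProduct_kronecker_one_mulVec L (ev · t),
    dotProduct_diagonal_kronecker_one_mulVec _ (ev · t),
    G.sum_sum_laplacian_mul_inner hw_off hL (ev · t)]
  refine ⟨hJ_deriv, ?_, posSemidef_diagonal_iff.2 hM_nonneg⟩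
  linarith [G.sum_sum_neighborFinset_mul_inner_sub_nonneg hw_symm hw_nonneg (ev · t),
    Finset.sum_nonneg fun i (_ : i ∈ Finset.univ) =>
      mul_nonneg (hM_nonneg i) (real_inner_self_nonneg (x := ev i t))]

/-- **Theorem 2 (energy decay).** Along any solution of the error system
`ė_pⁱ = e_vⁱ`, `mᵢė_vⁱ = uⁱ` with control law
`uⁱ = -Σ_{j∈Nᵢ} w_{ij}(e_vⁱ - e_vʲ) - Σ_{j∈Nᵢ} ∇_{e_pⁱ}Ṽ^{ij} - hᵢmᵢe_vⁱ`,
where `hᵢ ∈ {0,1}` indicates whether agent `i` detects the reference signal,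
the energy `J = ½Σᵢ(Ṽⁱ + mᵢ e_vⁱᵀe_vⁱ)` satisfies
`J̇ = -e_vᵀ(L⊗Iₙ)e_v - e_vᵀ(M̂⊗Iₙ)e_v ≤ 0`, where `M̂ = diag(h₁m₁, …, h_Nm_N)`
is positive semi-definite. -/
theorem energy_derivative_partial_information
    (N n : ℕ)
    (m : Fin N → ℝ) (hm : ∀ i, 0 < m i)
    (G : SimpleGraph (Fin N)) [DecidableRel G.Adj] (hG : G.Connected)
    (w : Fin N → Fin N → ℝ)
    (hw_symm : ∀ i j, w i j = w j i)
    (hw_nonneg : ∀ i j, 0 ≤ w i j)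
    (hw_diag : ∀ i, w i i = 0)
    (hw_adj : ∀ i j, 0 < w i j ↔ G.Adj i j)
    -- the potential `Ṽ^{ij}`, viewed as a function of the relative position
    -- vector `e_pⁱ - e_pʲ`
    (V : Fin N → Fin N → EuclideanSpace ℝ (Fin n) → ℝ)
    (hV_symm : ∀ i j, V i j = V j i)
    (hV_rad : ∀ i j (z z' : EuclideanSpace ℝ (Fin n)), ‖z‖ = ‖z'‖ → V i j z = V i j z')
    (hV_diff : ∀ i j, G.Adj i j → Differentiable ℝ (V i j))
    (hV_nonneg : ∀ i j z, 0 ≤ V i j z)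
    (h : Fin N → ℝ) (hh01 : ∀ i, h i = 0 ∨ h i = 1)
    (ep ev u : Fin N → ℝ → EuclideanSpace ℝ (Fin n))
    (hu : ∀ i t, u i t =
      -(∑ j ∈ G.neighborFinset i, w i j • (ev i t - ev j t))
      - (∑ j ∈ G.neighborFinset i, gradient (V i j) (ep i t - ep j t))
      - (h i * m i) • ev i t)
    (hep : ∀ i t, HasDerivAt (ep i) (ev i t) t)
    (hev : ∀ i t, HasDerivAt (ev i) ((m i)⁻¹ • u i t) t)
    (L : Matrix (Fin N) (Fin N) ℝ)
    (hL : ∀ i j, L i j = if i = j then ∑ k ∈ Finset.univ.erase i, w i k else -w i j)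
    (J : ℝ → ℝ)
    (hJ : ∀ t, J t = (1 / 2) * ∑ i,
      ((∑ j ∈ G.neighborFinset i, V i j (ep i t - ep j t)) + m i * ⟪ev i t, ev i t⟫))
    -- the stacked vector `e_v(t) ∈ ℝ^{Nn}`
    (e : ℝ → Fin N × Fin n → ℝ)
    (he : ∀ t p, e t p = ev p.1 t p.2) :
    ∀ t : ℝ,
      HasDerivAt J
        (-(e t ⬝ᵥ (L ⊗ₖ (1 : Matrix (Fin n) (Fin n) ℝ)).mulVec (e t))
          - e t ⬝ᵥ (Matrix.diagonal (fun i => h i * m i) ⊗ₖ (1 : Matrix (Fin n) (Fin n) ℝ)).mulVec (e t)) t ∧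
      (-(e t ⬝ᵥ (L ⊗ₖ (1 : Matrix (Fin n) (Fin n) ℝ)).mulVec (e t))
          - e t ⬝ᵥ (Matrix.diagonal (fun i => h i * m i) ⊗ₖ (1 : Matrix (Fin n) (Fin n) ℝ)).mulVec (e t) ≤ 0) ∧
      (Matrix.diagonal (fun i => h i * m i)).PosSemidef :=
  energy_derivative_partial_information_general N n m hm G w hw_symm hw_nonneg hw_adj V hV_symm
    hV_rad hV_diff h hh01 ep ev u hu hep hev L hL J hJ e he
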